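/- Define A(n) = −√[n]·Q_{n−1}(i;q)·P_n(−i;q) and B(n) = √[n]·Q_n(i;q)·P_{n−1}(−i;q), where the polynomials are evaluated at the imaginary unit i ∈ ℂ. Then lim_{p→∞} A(2p) = lim_{p→∞} B(2p+1) = A_α^{(1)}·A_β^{(1)} and lim_{p→∞} A(2p+1) = lim_{p→∞} B(2p) = S_α^{(2)}·S_β^{(2)} (in particular all four limits exist and are real). -/

import Mathlib

open Polynomial Filter

/-- The symmetric q-number `[n] = (q^n - q^{-n})/(q - q⁻¹)`. -/
noncomputable def qnum (q : ℝ) (n : ℕ) : ℝ := (q ^ (n : ℤ) - q ^ (-(n : ℤ))) / (q - q⁻¹)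

/-- The q-factorial `[n]! = [1][2]⋯[n]`. -/
noncomputable def qfact (q : ℝ) : ℕ → ℝ
  | 0 => 1
  | n + 1 => qfact q n * qnum q (n + 1)

/-- The even q-double factorial: `evenDF q n = [2n]!! = [2n][2n-2]⋯[2]`. -/
noncomputable def evenDF (q : ℝ) : ℕ → ℝ
  | 0 => 1
  | n + 1 => qnum q (2 * (n + 1)) * evenDF q n

/-- The odd q-double factorial: `oddDF q n = [2n-1]!! = [2n-1][2n-3]⋯[1]`. -/
noncomputable def oddDF (q : ℝ) : ℕ → ℝ
  | 0 => 1
  | n + 1 => qnum q (2 * n + 1) * oddDF q n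

/-- `alphaC q m n = α_{2m-1;n}`, with `α_{-1;n} = 1` and
`α_{2m-1;n} = Σ_{k=2m-1}^{n} [k]·α_{2m-3;k-2}`. -/
noncomputable def alphaC (q : ℝ) : ℕ → ℕ → ℝ
  | 0, _ => 1
  | m + 1, n => ∑ k ∈ Finset.Icc (2 * m + 1) n, qnum q k * alphaC q m (k - 2)

/-- `betaC q m n = β_{2m;n}`, with `β_{0;n} = 1` and
`β_{2m;n} = Σ_{k=2m}^{n} [k]·β_{2m-2;k-2}`. -/
noncomputable def betaC (q : ℝ) : ℕ → ℕ → ℝ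
  | 0, _ => 1
  | m + 1, n => ∑ k ∈ Finset.Icc (2 * m + 2) n, qnum q k * betaC q m (k - 2)

/-- `A_α^{(1)} = 1 + Σ_{k=1}^∞ (1/[2k-1]!!)·Σ_{m=0}^{k-1} α_{2m-1;2k-2}`. -/
noncomputable def Aalpha1 (q : ℝ) : ℝ :=
  1 + ∑' k : ℕ, (oddDF q (k + 1))⁻¹ * ∑ m ∈ Finset.range (k + 1), alphaC q m (2 * k)

/-- `S_α^{(2)} = Ψ(q) + Σ_{k=1}^∞ (1/[2k]!!)·Σ_{m=0}^{k-1} α_{2m-1;2k-1}`,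
where `Ψ(q) = 1 + Σ_{k=1}^∞ [2k-1]!!/[2k]!!`. -/
noncomputable def Salpha2 (q : ℝ) : ℝ :=
  (1 + ∑' k : ℕ, oddDF q (k + 1) / evenDF q (k + 1))
    + ∑' k : ℕ, (evenDF q (k + 1))⁻¹ * ∑ m ∈ Finset.range (k + 1), alphaC q m (2 * k + 1)

/-- `A_β^{(1)} = 1 + Σ_{k=1}^∞ (1/[2k]!!)·Σ_{m=0}^{k-1} β_{2m;2k-1}`. -/
noncomputable def Abeta1 (q : ℝ) : ℝ :=
  1 + ∑' k : ℕ, (evenDF q (k + 1))⁻¹ * ∑ m ∈ Finset.range (k + 1), betaC q m (2 * k + 1)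

/-- `S_β^{(2)} = Φ(q) + Σ_{k=2}^∞ (1/[2k-1]!!)·Σ_{m=0}^{k-2} β_{2m;2k-2}`,
where `Φ(q) = 1 + Σ_{k=1}^∞ [2k]!!/[2k+1]!!`. -/
noncomputable def Sbeta2 (q : ℝ) : ℝ :=
  (1 + ∑' k : ℕ, evenDF q (k + 1) / oddDF q (k + 2))
    + ∑' k : ℕ, (oddDF q (k + 2))⁻¹ * ∑ m ∈ Finset.range (k + 1), betaC q m (2 * k + 2)




lemma qnum_zero (q : ℝ) : qnum q 0 = 0 := by simp [qnum]

lemma qnum_nat (q : ℝ) (n : ℕ) :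
    qnum q n = (q ^ n - (q ^ n)⁻¹) / (q - q⁻¹) := by
  rw [qnum, zpow_neg, zpow_natCast]

lemma sub_inv_ne_zero (q : ℝ) (hq : 0 < q) (hq1 : q ≠ 1) : q - q⁻¹ ≠ 0 := by
  intro h
  have hq0 : q ≠ 0 := hq.ne'
  have h2 : q ^ 2 = 1 := by field_simp at h; nlinarith
  have : (q - 1) * (q + 1) = 0 := by nlinarith
  rcases mul_eq_zero.mp this with h3 | h3
  · exact hq1 (by linarith)
  · linarith

lemma qnum_one (q : ℝ) (hq : 0 < q) (hq1 : q ≠ 1) : qnum q 1 = 1 := by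
  rw [qnum_nat q, pow_one, div_self (sub_inv_ne_zero q hq hq1)]

lemma qnum_inv (q : ℝ) (hq : 0 < q) (n : ℕ) : qnum q⁻¹ n = qnum q n := by
  have hq0 : q ≠ 0 := hq.ne'
  rw [qnum_nat, qnum_nat, inv_inv, inv_pow, inv_inv, ← neg_div_neg_eq]
  congr 1 <;> ring

lemma qnum_pos (q : ℝ) (hq : 0 < q) (hq1 : q ≠ 1) (n : ℕ) : 0 < qnum q (n + 1) := by
  rw [qnum_nat q]
  rcases lt_or_gt_of_ne hq1 with h | h
  · have h1 : q ^ (n + 1) < 1 := pow_lt_one₀ hq.le h (by omega)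
    have h2 : (1:ℝ) < (q ^ (n + 1))⁻¹ := one_lt_inv₀ (by positivity) |>.mpr h1
    have h3 : (1:ℝ) < q⁻¹ := one_lt_inv₀ hq |>.mpr h
    exact div_pos_of_neg_of_neg (by linarith) (by linarith)
  · have h1 : (1:ℝ) < q ^ (n + 1) := one_lt_pow₀ h (by omega)
    have h2 : (q ^ (n + 1))⁻¹ < 1 := inv_lt_one_of_one_lt₀ h1
    have h3 : q⁻¹ < 1 := inv_lt_one_of_one_lt₀ h
    exact div_pos (by linarith) (by linarith)

lemma qnum_step_gt (q : ℝ) (h : 1 < q) (n : ℕ) : q * qnum q n ≤ qnum q (n + 1) := by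
  have hq : 0 < q := by linarith
  have hq0 : q ≠ 0 := hq.ne'
  have hd : 0 < q - q⁻¹ := by
    have : q⁻¹ < 1 := inv_lt_one_of_one_lt₀ h
    linarith
  rw [qnum_nat q, qnum_nat q, ← mul_div_assoc]
  gcongr
  -- q * (q^n - (q^n)⁻¹) ≤ q^(n+1) - (q^(n+1))⁻¹
  have hp : (0:ℝ) < q ^ n := by positivity
  have key : (q ^ n * q)⁻¹ ≤ q * (q ^ n)⁻¹ := by
    rw [mul_inv]
    have : (q ^ n)⁻¹ * q⁻¹ ≤ (q ^ n)⁻¹ * q := by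
      apply mul_le_mul_of_nonneg_left ?_ (by positivity)
      have : q⁻¹ < 1 := inv_lt_one_of_one_lt₀ h
      linarith
    linarith [this]
  rw [pow_succ]
  linarith [key]

lemma exists_ratio (q : ℝ) (hq : 0 < q) (hq1 : q ≠ 1) :
    ∃ r : ℝ, 0 < r ∧ r < 1 ∧ ∀ n : ℕ, qnum q n ≤ r * qnum q (n + 1) := by
  rcases lt_or_gt_of_ne hq1 with h | h
  · refine ⟨q, hq, h, fun n => ?_⟩
    have h1 : 1 < q⁻¹ := one_lt_inv₀ hq |>.mpr h
    have := qnum_step_gt q⁻¹ h1 n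
    rw [qnum_inv q hq, qnum_inv q hq] at this
    calc qnum q n = q * (q⁻¹ * qnum q n) := by field_simp
    _ ≤ q * qnum q (n+1) := mul_le_mul_of_nonneg_left this hq.le
  · refine ⟨q⁻¹, by positivity, inv_lt_one_of_one_lt₀ h, fun n => ?_⟩
    have := qnum_step_gt q h n
    calc qnum q n = q⁻¹ * (q * qnum q n) := by field_simp
    _ ≤ q⁻¹ * qnum q (n+1) := mul_le_mul_of_nonneg_left this (by positivity)

/-- first-kind numerator sequence -/
noncomputable def aS (q : ℝ) : ℕ → ℝ
  | 0 => 1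
  | 1 => 1
  | n + 2 => aS q (n + 1) + qnum q (n + 1) * aS q n

noncomputable def bS (q : ℝ) : ℕ → ℝ
  | 0 => 0
  | 1 => 1
  | n + 2 => bS q (n + 1) + qnum q (n + 1) * bS q n

/-- interleaved double factorial: Dq (2p) = oddDF p, Dq (2p+1) = evenDF p -/
noncomputable def Dq (q : ℝ) : ℕ → ℝ
  | 0 => 1
  | 1 => 1
  | n + 2 => qnum q (n + 1) * Dq q n

lemma Dq_even (q : ℝ) (p : ℕ) : Dq q (2 * p) = oddDF q p := by
  induction p with
  | zero => rfl
  | succ p ih =>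
    show Dq q (2 * p + 2) = oddDF q (p + 1)
    rw [show 2*p+2 = (2*p)+2 from rfl, Dq, ih, oddDF]

lemma Dq_odd (q : ℝ) (p : ℕ) : Dq q (2 * p + 1) = evenDF q p := by
  induction p with
  | zero => rfl
  | succ p ih =>
    show Dq q (2 * p + 1 + 2) = evenDF q (p + 1)
    rw [Dq, ih, evenDF]
    ring_nf

lemma qfact_eq_Dq (q : ℝ) (n : ℕ) : qfact q n = Dq q n * Dq q (n + 1) := by
  induction n with
  | zero => show (1:ℝ) = 1 * 1; ring
  | succ n ih =>
    rw [qfact, ih, show n + 1 + 1 = n + 2 from rfl, Dq]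
    ring

section Pos
variable (q : ℝ) (hq : 0 < q) (hq1 : q ≠ 1)
include hq hq1


lemma Dq_pos : ∀ n, 0 < Dq q n
  | 0 => one_pos
  | 1 => one_pos
  | (n+2) => by rw [Dq]; exact mul_pos (qnum_pos q hq hq1 n) (Dq_pos n)

lemma oddDF_pos (p : ℕ) : 0 < oddDF q p := by
  rw [← Dq_even]; exact Dq_pos q hq hq1 _

lemma evenDF_pos (p : ℕ) : 0 < evenDF q p := by
  rw [← Dq_odd]; exact Dq_pos q hq hq1 _

lemma qfact_pos (n : ℕ) : 0 < qfact q n := by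
  rw [qfact_eq_Dq]; exact mul_pos (Dq_pos q hq hq1 _) (Dq_pos q hq hq1 _)

lemma aS_pos : ∀ n, 0 < aS q n
  | 0 => one_pos
  | 1 => one_pos
  | (n+2) => by
    rw [aS]
    have := aS_pos n
    have := aS_pos (n+1)
    have := qnum_pos q hq hq1 n
    positivity

lemma bS_nonneg : ∀ n, 0 ≤ bS q n
  | 0 => le_refl 0
  | 1 => zero_le_one
  | (n+2) => by
    rw [bS]
    have := bS_nonneg n
    have := bS_nonneg (n+1)
    have := qnum_pos q hq hq1 n
    positivity

lemma bS_pos : ∀ n, 0 < bS q (n + 1)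
  | 0 => one_pos
  | (n+1) => by
    rw [bS]
    have h1 := bS_pos n
    have h4 : 0 ≤ qnum q (n+1) * bS q n :=
      mul_nonneg (qnum_pos q hq hq1 n).le (bS_nonneg q hq hq1 n)
    linarith

end Pos

section Comb
variable (q : ℝ) (hq : 0 < q) (hq1 : q ≠ 1)

include hq hq1 in
lemma qnum_nonneg (n : ℕ) : 0 ≤ qnum q n := by
  cases n with
  | zero => simp [qnum]
  | succ n => exact (qnum_pos q hq hq1 n).le

include hq hq1 in
lemma alphaC_nonneg : ∀ m n, 0 ≤ alphaC q m n
  | 0, n => zero_le_one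
  | (m+1), n => by
    rw [alphaC]
    apply Finset.sum_nonneg
    intro k _
    exact mul_nonneg (qnum_nonneg q hq hq1 k) (alphaC_nonneg m (k-2))

include hq hq1 in
lemma betaC_nonneg : ∀ m n, 0 ≤ betaC q m n
  | 0, n => zero_le_one
  | (m+1), n => by
    rw [betaC]
    apply Finset.sum_nonneg
    intro k _
    exact mul_nonneg (qnum_nonneg q hq hq1 k) (betaC_nonneg m (k-2))

lemma alphaC_zero (m n : ℕ) (h : n < 2 * m + 1) : alphaC q (m + 1) n = 0 := by
  rw [alphaC, Finset.Icc_eq_empty (by omega), Finset.sum_empty]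

lemma betaC_zero (m n : ℕ) (h : n < 2 * m + 2) : betaC q (m + 1) n = 0 := by
  rw [betaC, Finset.Icc_eq_empty (by omega), Finset.sum_empty]

lemma alpha_step (j m : ℕ) :
    alphaC q (j + 1) (m + 2) = alphaC q (j + 1) (m + 1) + qnum q (m + 2) * alphaC q j m := by
  by_cases h : 2 * j + 1 ≤ m + 2
  · rw [alphaC, alphaC, show m + 2 = (m + 1) + 1 from rfl,
      Finset.sum_Icc_succ_top h]
    norm_num
    left; rfl
  · rw [alphaC_zero q j _ (by omega), alphaC_zero q j _ (by omega)]
    rcases j with _ | j'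
    · omega
    · rw [alphaC_zero q j' _ (by omega)]
      ring

lemma beta_step (j m : ℕ) :
    betaC q (j + 1) (m + 2) = betaC q (j + 1) (m + 1) + qnum q (m + 2) * betaC q j m := by
  by_cases h : 2 * j + 2 ≤ m + 2
  · rw [betaC, betaC, show m + 2 = (m + 1) + 1 from rfl,
      Finset.sum_Icc_succ_top h]
    norm_num
    left; rfl
  · rw [betaC_zero q j _ (by omega), betaC_zero q j _ (by omega)]
    rcases j with _ | j'
    · omega
    · rw [betaC_zero q j' _ (by omega)]
      ring

end Comb

noncomputable def gA (q : ℝ) (n : ℕ) : ℝ := ∑ m ∈ Finset.range (n + 1), alphaC q m n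
noncomputable def gB (q : ℝ) (n : ℕ) : ℝ := ∑ m ∈ Finset.range (n + 1), betaC q m n

section Comb2
variable (q : ℝ)

lemma gA_rec (m : ℕ) : gA q (m + 2) = gA q (m + 1) + qnum q (m + 2) * gA q m := by
  unfold gA
  rw [Finset.sum_range_succ' (fun m' => alphaC q m' (m + 2)) (m + 2)]
  conv_rhs => rw [Finset.sum_range_succ' (fun m' => alphaC q m' (m + 1)) (m + 1)]
  have step : ∀ i ∈ Finset.range (m + 2),
      alphaC q (i + 1) (m + 2) = alphaC q (i + 1) (m + 1) + qnum q (m + 2) * alphaC q i m :=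
    fun i _ => alpha_step q i m
  rw [Finset.sum_congr rfl step, Finset.sum_add_distrib]
  have h1 : ∑ i ∈ Finset.range (m + 2), alphaC q (i + 1) (m + 1)
      = ∑ i ∈ Finset.range (m + 1), alphaC q (i + 1) (m + 1) := by
    rw [Finset.sum_range_succ, alphaC_zero q (m + 1) (m + 1) (by omega), add_zero]
  have h2 : ∑ i ∈ Finset.range (m + 2), qnum q (m + 2) * alphaC q i m
      = qnum q (m + 2) * ∑ i ∈ Finset.range (m + 1), alphaC q i m := by
    rw [Finset.sum_range_succ]
    rcases m with _ | m'
    · rw [alphaC_zero q 0 0 (by omega)]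
      rw [← Finset.mul_sum]; ring
    · rw [show m' + 1 + 1 = m' + 1 + 1 from rfl, alphaC_zero q (m' + 1) (m' + 1) (by omega)]
      rw [← Finset.mul_sum]; ring
  rw [h1, h2]
  have hm : alphaC q 0 (m + 2) = 1 := rfl
  have hm1 : alphaC q 0 (m + 1) = 1 := rfl
  rw [hm, hm1]
  ring

lemma gB_rec (m : ℕ) : gB q (m + 2) = gB q (m + 1) + qnum q (m + 2) * gB q m := by
  unfold gB
  rw [Finset.sum_range_succ' (fun m' => betaC q m' (m + 2)) (m + 2)]
  conv_rhs => rw [Finset.sum_range_succ' (fun m' => betaC q m' (m + 1)) (m + 1)]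
  have step : ∀ i ∈ Finset.range (m + 2),
      betaC q (i + 1) (m + 2) = betaC q (i + 1) (m + 1) + qnum q (m + 2) * betaC q i m :=
    fun i _ => beta_step q i m
  rw [Finset.sum_congr rfl step, Finset.sum_add_distrib]
  have h1 : ∑ i ∈ Finset.range (m + 2), betaC q (i + 1) (m + 1)
      = ∑ i ∈ Finset.range (m + 1), betaC q (i + 1) (m + 1) := by
    rw [Finset.sum_range_succ, betaC_zero q (m + 1) (m + 1) (by omega), add_zero]
  have h2 : ∑ i ∈ Finset.range (m + 2), qnum q (m + 2) * betaC q i m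
      = qnum q (m + 2) * ∑ i ∈ Finset.range (m + 1), betaC q i m := by
    rw [Finset.sum_range_succ]
    rcases m with _ | m'
    · rw [betaC_zero q 0 0 (by omega)]
      rw [← Finset.mul_sum]; ring
    · rw [betaC_zero q (m' + 1) (m' + 1) (by omega)]
      rw [← Finset.mul_sum]; ring
  rw [h1, h2]
  have hm : betaC q 0 (m + 2) = 1 := rfl
  have hm1 : betaC q 0 (m + 1) = 1 := rfl
  rw [hm, hm1]
  ring

lemma aS_eq_gA : ∀ n, aS q (n + 1) = gA q n := by
  have key : ∀ n, aS q (n + 1) = gA q n ∧ aS q (n + 2) = gA q (n + 1) := by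
    intro n
    induction n with
    | zero =>
      constructor
      · show (1:ℝ) = gA q 0
        unfold gA; simp [alphaC]
      · show aS q 2 = gA q 1
        rw [show aS q 2 = aS q 1 + qnum q 1 * aS q 0 from rfl]
        unfold gA
        rw [Finset.sum_range_succ, Finset.sum_range_one]
        rw [show alphaC q 1 1 = ∑ k ∈ Finset.Icc 1 1, qnum q k * alphaC q 0 (k-2) from rfl]
        simp [alphaC, aS]
    | succ n ih =>
      refine ⟨ih.2, ?_⟩
      rw [show aS q (n + 3) = aS q (n + 2) + qnum q (n + 2) * aS q (n + 1) from rfl,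
        ih.1, ih.2, gA_rec]
  exact fun n => (key n).1

lemma bS_eq_gB : ∀ n, bS q (n + 1) = gB q n := by
  have key : ∀ n, bS q (n + 1) = gB q n ∧ bS q (n + 2) = gB q (n + 1) := by
    intro n
    induction n with
    | zero =>
      constructor
      · show (1:ℝ) = gB q 0
        unfold gB; simp [betaC]
      · show bS q 2 = gB q 1
        rw [show bS q 2 = bS q 1 + qnum q 1 * bS q 0 from rfl]
        unfold gB
        rw [Finset.sum_range_succ, Finset.sum_range_one]
        rw [show betaC q 1 1 = ∑ k ∈ Finset.Icc 2 1, qnum q k * betaC q 0 (k-2) from rfl]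
        simp [betaC, bS]
    | succ n ih =>
      refine ⟨ih.2, ?_⟩
      rw [show bS q (n + 3) = bS q (n + 2) + qnum q (n + 2) * bS q (n + 1) from rfl,
        ih.1, ih.2, gB_rec]
  exact fun n => (key n).1

end Comb2

section Comb3
variable (q : ℝ)

lemma alphaC_diag : ∀ k : ℕ, alphaC q (k + 1) (2 * k + 1) = oddDF q (k + 1)
  | 0 => by
    rw [show alphaC q 1 1 = ∑ j ∈ Finset.Icc 1 1, qnum q j * alphaC q 0 (j - 2) from rfl]
    simp [alphaC, oddDF]
  | (k+1) => by
    rw [show alphaC q (k + 2) (2 * (k + 1) + 1)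
        = ∑ j ∈ Finset.Icc (2 * (k + 1) + 1) (2 * (k + 1) + 1),
            qnum q j * alphaC q (k + 1) (j - 2) from rfl,
      Finset.Icc_self, Finset.sum_singleton]
    have : 2 * (k + 1) + 1 - 2 = 2 * k + 1 := by omega
    rw [this, alphaC_diag k]
    show qnum q (2 * (k + 1) + 1) * oddDF q (k + 1) = qnum q (2 * (k + 1) + 1) * oddDF q (k + 1)
    rfl

lemma betaC_diag : ∀ k : ℕ, betaC q (k + 1) (2 * k + 2) = evenDF q (k + 1)
  | 0 => by
    rw [show betaC q 1 2 = ∑ j ∈ Finset.Icc 2 2, qnum q j * betaC q 0 (j - 2) from rfl]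
    simp [betaC, evenDF]
  | (k+1) => by
    rw [show betaC q (k + 2) (2 * (k + 1) + 2)
        = ∑ j ∈ Finset.Icc (2 * (k + 1) + 2) (2 * (k + 1) + 2),
            qnum q j * betaC q (k + 1) (j - 2) from rfl,
      Finset.Icc_self, Finset.sum_singleton]
    have : 2 * (k + 1) + 2 - 2 = 2 * k + 2 := by omega
    rw [this, betaC_diag k]
    rfl

-- I1
lemma sumA_even (k : ℕ) :
    ∑ m ∈ Finset.range (k + 1), alphaC q m (2 * k) = aS q (2 * k + 1) := by
  rw [aS_eq_gA, gA]
  apply Finset.sum_subset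
  · intro x hx
    simp only [Finset.mem_range] at *
    omega
  · intro x _ hx
    simp only [Finset.mem_range] at hx
    rcases x with _ | x'
    · omega
    · exact alphaC_zero q x' (2 * k) (by omega)

-- I2
lemma sumA_odd (k : ℕ) :
    ∑ m ∈ Finset.range (k + 1), alphaC q m (2 * k + 1)
      = aS q (2 * k + 2) - oddDF q (k + 1) := by
  rw [aS_eq_gA, gA]
  have h1 : ∑ m ∈ Finset.range (2 * k + 2), alphaC q m (2 * k + 1)
      = ∑ m ∈ Finset.range (k + 2), alphaC q m (2 * k + 1) := by
    symm
    apply Finset.sum_subset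
    · intro x hx; simp only [Finset.mem_range] at *; omega
    · intro x _ hx
      simp only [Finset.mem_range] at hx
      rcases x with _ | x'
      · omega
      · exact alphaC_zero q x' (2 * k + 1) (by omega)
  rw [h1]
  conv_rhs => rw [Finset.sum_range_succ, alphaC_diag q k]
  ring

-- I3
lemma sumB_odd (k : ℕ) :
    ∑ m ∈ Finset.range (k + 1), betaC q m (2 * k + 1) = bS q (2 * k + 2) := by
  rw [bS_eq_gB, gB]
  apply Finset.sum_subset
  · intro x hx; simp only [Finset.mem_range] at *; omega
  · intro x _ hx
    simp only [Finset.mem_range] at hx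
    rcases x with _ | x'
    · omega
    · exact betaC_zero q x' (2 * k + 1) (by omega)

-- I4
lemma sumB_even (k : ℕ) :
    ∑ m ∈ Finset.range (k + 1), betaC q m (2 * k + 2)
      = bS q (2 * k + 3) - evenDF q (k + 1) := by
  rw [show (2*k+3) = (2*k+2)+1 from rfl, bS_eq_gB, gB]
  have h1 : ∑ m ∈ Finset.range (2 * k + 3), betaC q m (2 * k + 2)
      = ∑ m ∈ Finset.range (k + 2), betaC q m (2 * k + 2) := by
    symm
    apply Finset.sum_subset
    · intro x hx; simp only [Finset.mem_range] at *; omega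
    · intro x _ hx
      simp only [Finset.mem_range] at hx
      rcases x with _ | x'
      · omega
      · exact betaC_zero q x' (2 * k + 2) (by omega)
  rw [h1]
  conv_rhs => rw [Finset.sum_range_succ, betaC_diag q k]
  ring

end Comb3

section An
variable (q : ℝ) (hq : 0 < q) (hq1 : q ≠ 1)
  (r : ℝ) (hr0 : 0 < r) (hr1 : r < 1) (hstep : ∀ n : ℕ, qnum q n ≤ r * qnum q (n + 1))

include hq hq1 hr0 hr1 hstep

omit hr1 in
lemma oddDF_le : ∀ p : ℕ, oddDF q p ≤ r ^ p * evenDF q p := by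
  intro p
  induction p with
  | zero => simp [oddDF, evenDF]
  | succ p ih =>
    have he : 0 < evenDF q p := by rw [← Dq_odd q]; exact Dq_pos q hq hq1 _
    have hqn : 0 < qnum q (2 * p + 1) := qnum_pos q hq hq1 _
    calc oddDF q (p+1) = qnum q (2*p+1) * oddDF q p := rfl
    _ ≤ qnum q (2*p+1) * (r ^ p * evenDF q p) := mul_le_mul_of_nonneg_left ih hqn.le
    _ ≤ (r * qnum q (2*p+2)) * (r ^ p * evenDF q p) := by
        apply mul_le_mul_of_nonneg_right (hstep (2*p+1)) (by positivity)
    _ = r ^ (p+1) * evenDF q (p+1) := by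
        rw [show evenDF q (p+1) = qnum q (2*(p+1)) * evenDF q p from rfl]
        rw [show 2*(p+1) = 2*p+2 by ring]
        ring

omit hr1 in
lemma evenDF_le : ∀ p : ℕ, evenDF q p ≤ r ^ p * oddDF q (p + 1) := by
  intro p
  induction p with
  | zero =>
    show (1:ℝ) ≤ r ^ 0 * oddDF q 1
    rw [pow_zero, one_mul, show oddDF q 1 = qnum q 1 * 1 from rfl,
      qnum_one q hq hq1, one_mul]
  | succ p ih =>
    have ho : 0 < oddDF q (p+1) := by rw [← Dq_even q]; exact Dq_pos q hq hq1 _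
    have hqn : 0 < qnum q (2 * (p+1)) := by
      rw [show 2*(p+1) = (2*p+1)+1 by ring]; exact qnum_pos q hq hq1 _
    calc evenDF q (p+1) = qnum q (2*(p+1)) * evenDF q p := rfl
    _ ≤ qnum q (2*(p+1)) * (r ^ p * oddDF q (p+1)) := mul_le_mul_of_nonneg_left ih hqn.le
    _ ≤ (r * qnum q (2*(p+1)+1)) * (r ^ p * oddDF q (p+1)) := by
        apply mul_le_mul_of_nonneg_right ?_ (by positivity)
        have := hstep (2*(p+1))
        exact this
    _ = r ^ (p+1) * oddDF q (p+2) := by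
        rw [show oddDF q (p+2) = qnum q (2*(p+1)+1) * oddDF q (p+1) from rfl]
        ring

omit hq hq1 hstep in
lemma geo_half (N : ℕ) : ∑ j ∈ Finset.range N, r ^ (j / 2) ≤ 2 / (1 - r) := by
  have h2 : ∀ M : ℕ, ∑ j ∈ Finset.range (2 * M), r ^ (j / 2) = 2 * ∑ k ∈ Finset.range M, r ^ k := by
    intro M
    induction M with
    | zero => simp
    | succ M ih =>
      rw [show 2 * (M + 1) = (2 * M + 1) + 1 by ring, Finset.sum_range_succ,
        Finset.sum_range_succ, ih, Finset.sum_range_succ,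
        show (2 * M) / 2 = M by omega, show (2 * M + 1) / 2 = M by omega]
      ring
  have hsub : ∑ j ∈ Finset.range N, r ^ (j / 2) ≤ ∑ j ∈ Finset.range (2 * N), r ^ (j / 2) := by
    apply Finset.sum_le_sum_of_subset_of_nonneg
    · apply Finset.range_subset_range.mpr; omega
    · intros; positivity
  have hgeom : ∑ k ∈ Finset.range N, r ^ k ≤ 1 / (1 - r) := by
    rw [geom_sum_eq hr1.ne N]
    have e : (r ^ N - 1) / (r - 1) = (1 - r ^ N) / (1 - r) := by
      rw [← neg_div_neg_eq]; congr 1 <;> ring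
    rw [e]
    gcongr
    · have : 0 ≤ r ^ N := by positivity
      linarith
  calc _ ≤ _ := hsub
  _ = 2 * ∑ k ∈ Finset.range N, r ^ k := h2 N
  _ ≤ 2 * (1 / (1 - r)) := by linarith
  _ = 2 / (1 - r) := by ring

lemma rho_le (n : ℕ) : Dq q n / Dq q (n + 1) ≤ r ^ (n / 2) := by
  have hd : 0 < Dq q (n + 1) := Dq_pos q hq hq1 _
  rw [div_le_iff₀ hd]
  rcases Nat.even_or_odd n with ⟨p, hp⟩ | ⟨p, hp⟩
  · subst hp
    rw [show p + p = 2 * p by ring, Dq_even q, Dq_odd q,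
      show (2 * p) / 2 = p by omega]
    exact oddDF_le q hq hq1 r hr0 hstep p
  · subst hp
    rw [show 2 * p + 1 + 1 = 2 * (p + 1) by ring, Dq_odd q, Dq_even q,
      show (2 * p + 1) / 2 = p by omega]
    exact evenDF_le q hq hq1 r hr0 hstep p

end An

section Bound
variable (q : ℝ) (hq : 0 < q) (hq1 : q ≠ 1)
  (r : ℝ) (hr0 : 0 < r) (hr1 : r < 1) (hstep : ∀ n : ℕ, qnum q n ≤ r * qnum q (n + 1))
  (c : ℕ → ℝ) (hc : ∀ n, c (n + 2) = c (n + 1) + qnum q (n + 1) * c n)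
  (hc0 : ∀ n, 0 ≤ c n)

include hq hq1 hc in
lemma z_rec (n : ℕ) :
    c (n + 2) / Dq q (n + 2)
      = c n / Dq q n + (Dq q (n + 1) / Dq q (n + 2)) * (c (n + 1) / Dq q (n + 1)) := by
  have d0 := (Dq_pos q hq hq1 n).ne'
  have d1 := (Dq_pos q hq hq1 (n + 1)).ne'
  have d2 := (Dq_pos q hq hq1 (n + 2)).ne'
  rw [hc n, show Dq q (n + 2) = qnum q (n + 1) * Dq q n from rfl] at *
  have hqn := (qnum_pos q hq hq1 n).ne'
  field_simp
  ring

include hq hq1 hr0 hr1 hstep hc hc0 in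
lemma z_bound (n : ℕ) :
    c n / Dq q n ≤ (c 0 + c 1) * Real.exp (2 / (1 - r)) := by
  set z : ℕ → ℝ := fun n => c n / Dq q n with hz
  have hznn : ∀ m, 0 ≤ z m := fun m => div_nonneg (hc0 m) (Dq_pos q hq hq1 m).le
  set u : ℕ → ℝ := fun n => z n + z (n + 1) with hu
  have hunn : ∀ m, 0 ≤ u m := fun m => add_nonneg (hznn m) (hznn (m + 1))
  have hrho : ∀ m, 0 ≤ Dq q m / Dq q (m + 1) :=
    fun m => div_nonneg (Dq_pos q hq hq1 m).le (Dq_pos q hq hq1 (m + 1)).le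
  have key : ∀ m, u m ≤ u 0 * Real.exp (∑ j ∈ Finset.range m, Dq q (j + 1) / Dq q (j + 2)) := by
    intro m
    induction m with
    | zero => simp
    | succ m ih =>
      have hrec := z_rec q hq hq1 c hc m
      have step : u (m + 1) ≤ (1 + Dq q (m + 1) / Dq q (m + 2)) * u m := by
        show z (m + 1) + z (m + 2) ≤ _
        have h1 := hznn m
        have h2 := hznn (m + 1)
        have h3 := hrho (m + 1)
        have hz2 : z (m + 2) = z m + (Dq q (m + 1) / Dq q (m + 2)) * z (m + 1) := hrec
        rw [hz2]
        show _ ≤ (1 + Dq q (m + 1) / Dq q (m + 2)) * (z m + z (m + 1))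
        nlinarith
      have hexp : (1 + Dq q (m + 1) / Dq q (m + 2)) ≤ Real.exp (Dq q (m + 1) / Dq q (m + 2)) := by
        have := Real.add_one_le_exp (Dq q (m + 1) / Dq q (m + 2))
        linarith
      calc u (m + 1) ≤ (1 + Dq q (m + 1) / Dq q (m + 2)) * u m := step
      _ ≤ Real.exp (Dq q (m + 1) / Dq q (m + 2)) * u m := by
          apply mul_le_mul_of_nonneg_right hexp (hunn m)
      _ ≤ Real.exp (Dq q (m + 1) / Dq q (m + 2)) *
            (u 0 * Real.exp (∑ j ∈ Finset.range m, Dq q (j + 1) / Dq q (j + 2))) := by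
          apply mul_le_mul_of_nonneg_left ih (Real.exp_pos _).le
      _ = u 0 * Real.exp (∑ j ∈ Finset.range (m + 1), Dq q (j + 1) / Dq q (j + 2)) := by
          rw [Finset.sum_range_succ, Real.exp_add]
          ring
  have hsum : ∀ m, (∑ j ∈ Finset.range m, Dq q (j + 1) / Dq q (j + 2)) ≤ 2 / (1 - r) := by
    intro m
    calc ∑ j ∈ Finset.range m, Dq q (j + 1) / Dq q (j + 2)
        ≤ ∑ j ∈ Finset.range m, r ^ (j / 2) := by
          apply Finset.sum_le_sum
          intro j _
          calc Dq q (j + 1) / Dq q (j + 2) ≤ r ^ ((j + 1) / 2) :=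
                rho_le q hq hq1 r hr0 hr1 hstep (j + 1)
          _ ≤ r ^ (j / 2) := pow_le_pow_of_le_one hr0.le hr1.le (by omega)
    _ ≤ 2 / (1 - r) := geo_half r hr0 hr1 m
  have hu0 : u 0 = c 0 + c 1 := by
    simp only [hu, hz]
    show c 0 / Dq q 0 + c 1 / Dq q 1 = c 0 + c 1
    norm_num [Dq]
  calc c n / Dq q n = z n := rfl
  _ ≤ u n := by have := hznn (n + 1); simp only [hu]; linarith [hznn n]
  _ ≤ u 0 * Real.exp (∑ j ∈ Finset.range n, Dq q (j + 1) / Dq q (j + 2)) := key n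
  _ ≤ (c 0 + c 1) * Real.exp (2 / (1 - r)) := by
      rw [hu0]
      apply mul_le_mul_of_nonneg_left ?_ (by linarith [hc0 0, hc0 1])
      exact Real.exp_le_exp.mpr (hsum n)

end Bound

section Tel
variable (q : ℝ) (hq : 0 < q) (hq1 : q ≠ 1)
  (r : ℝ) (hr0 : 0 < r) (hr1 : r < 1) (hstep : ∀ n : ℕ, qnum q n ≤ r * qnum q (n + 1))
  (c : ℕ → ℝ) (hc : ∀ n, c (n + 2) = c (n + 1) + qnum q (n + 1) * c n)
  (hc0 : ∀ n, 0 ≤ c n)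

include hq hq1 hc in
lemma tel_even : ∀ p : ℕ, c (2 * p) / oddDF q p
    = c 0 + ∑ j ∈ Finset.range p, c (2 * j + 1) / oddDF q (j + 1) := by
  intro p
  induction p with
  | zero => simp [oddDF]
  | succ p ih =>
    rw [Finset.sum_range_succ, ← add_assoc, ← ih]
    have ho : (0:ℝ) < oddDF q p := by rw [← Dq_even q]; exact Dq_pos q hq hq1 _
    have hqn : 0 < qnum q (2 * p + 1) := qnum_pos q hq hq1 _
    have hrec : c (2 * (p + 1)) = c (2 * p + 1) + qnum q (2 * p + 1) * c (2 * p) := by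
      rw [show 2 * (p + 1) = (2 * p) + 2 by ring]; exact hc (2 * p)
    have hdf : oddDF q (p + 1) = qnum q (2 * p + 1) * oddDF q p := rfl
    rw [hrec, hdf]
    field_simp
    ring

include hq hq1 hc in
lemma tel_odd : ∀ p : ℕ, c (2 * p + 1) / evenDF q p
    = c 1 + ∑ j ∈ Finset.range p, c (2 * j + 2) / evenDF q (j + 1) := by
  intro p
  induction p with
  | zero => simp [evenDF]
  | succ p ih =>
    rw [Finset.sum_range_succ, ← add_assoc, ← ih]
    have he : (0:ℝ) < evenDF q p := by rw [← Dq_odd q]; exact Dq_pos q hq hq1 _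
    have hqn : 0 < qnum q (2 * p + 2) := qnum_pos q hq hq1 _
    have hrec : c (2 * (p + 1) + 1) = c (2 * p + 2) + qnum q (2 * p + 2) * c (2 * p + 1) := by
      rw [show 2 * (p + 1) + 1 = (2 * p + 1) + 2 by ring]
      rw [hc (2 * p + 1)]
    have hdf : evenDF q (p + 1) = qnum q (2 * p + 2) * evenDF q p := by
      rw [show evenDF q (p + 1) = qnum q (2 * (p + 1)) * evenDF q p from rfl,
        show 2 * (p + 1) = 2 * p + 2 by ring]
    rw [hrec, hdf]
    field_simp
    ring

include hq hq1 hr0 hr1 hstep hc hc0 in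
lemma termE_le (j : ℕ) : c (2 * j + 1) / oddDF q (j + 1)
    ≤ ((c 0 + c 1) * Real.exp (2 / (1 - r))) * r ^ j := by
  set K := (c 0 + c 1) * Real.exp (2 / (1 - r)) with hK
  have hK0 : 0 ≤ K := mul_nonneg (by linarith [hc0 0, hc0 1]) (Real.exp_pos _).le
  have ho : (0:ℝ) < oddDF q (j + 1) := by rw [← Dq_even q]; exact Dq_pos q hq hq1 _
  have he : (0:ℝ) < evenDF q j := by rw [← Dq_odd q]; exact Dq_pos q hq hq1 _
  have hz : c (2 * j + 1) ≤ K * evenDF q j := by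
    have := z_bound q hq hq1 r hr0 hr1 hstep c hc hc0 (2 * j + 1)
    rw [Dq_odd q, div_le_iff₀ he, ← hK] at this
    exact this
  rw [div_le_iff₀ ho]
  calc c (2 * j + 1) ≤ K * evenDF q j := hz
  _ ≤ K * (r ^ j * oddDF q (j + 1)) :=
      mul_le_mul_of_nonneg_left (evenDF_le q hq hq1 r hr0 hstep j) hK0
  _ = K * r ^ j * oddDF q (j + 1) := by ring

include hq hq1 hr0 hr1 hstep hc hc0 in
lemma termO_le (j : ℕ) : c (2 * j + 2) / evenDF q (j + 1)
    ≤ ((c 0 + c 1) * Real.exp (2 / (1 - r))) * r ^ j := by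
  set K := (c 0 + c 1) * Real.exp (2 / (1 - r)) with hK
  have hK0 : 0 ≤ K := mul_nonneg (by linarith [hc0 0, hc0 1]) (Real.exp_pos _).le
  have ho : (0:ℝ) < oddDF q (j + 1) := by rw [← Dq_even q]; exact Dq_pos q hq hq1 _
  have he : (0:ℝ) < evenDF q (j + 1) := by rw [← Dq_odd q]; exact Dq_pos q hq hq1 _
  have hz : c (2 * j + 2) ≤ K * oddDF q (j + 1) := by
    have := z_bound q hq hq1 r hr0 hr1 hstep c hc hc0 (2 * (j + 1))
    rw [Dq_even q, div_le_iff₀ ho, ← hK] at this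
    rw [show 2 * j + 2 = 2 * (j + 1) by ring]
    exact this
  rw [div_le_iff₀ he]
  calc c (2 * j + 2) ≤ K * oddDF q (j + 1) := hz
  _ ≤ K * (r ^ (j + 1) * evenDF q (j + 1)) :=
      mul_le_mul_of_nonneg_left (oddDF_le q hq hq1 r hr0 hstep (j + 1)) hK0
  _ = (K * r ^ (j + 1)) * evenDF q (j + 1) := by ring
  _ ≤ K * r ^ j * evenDF q (j + 1) := by
      have h1 : r ^ (j + 1) ≤ r ^ j := pow_le_pow_of_le_one hr0.le hr1.le (by omega)
      exact mul_le_mul_of_nonneg_right (mul_le_mul_of_nonneg_left h1 hK0) he.le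

include hq hq1 hr0 hr1 hstep hc hc0 in
lemma summableE : Summable (fun j : ℕ => c (2 * j + 1) / oddDF q (j + 1)) := by
  apply Summable.of_nonneg_of_le
  · intro j
    apply div_nonneg (hc0 _)
    have : (0:ℝ) < oddDF q (j + 1) := by rw [← Dq_even q]; exact Dq_pos q hq hq1 _
    linarith
  · exact fun j => termE_le q hq hq1 r hr0 hr1 hstep c hc hc0 j
  · exact (summable_geometric_of_lt_one hr0.le hr1).mul_left _

include hq hq1 hr0 hr1 hstep hc hc0 in
lemma summableO : Summable (fun j : ℕ => c (2 * j + 2) / evenDF q (j + 1)) := by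
  apply Summable.of_nonneg_of_le
  · intro j
    apply div_nonneg (hc0 _)
    have : (0:ℝ) < evenDF q (j + 1) := by rw [← Dq_odd q]; exact Dq_pos q hq hq1 _
    linarith
  · exact fun j => termO_le q hq hq1 r hr0 hr1 hstep c hc hc0 j
  · exact (summable_geometric_of_lt_one hr0.le hr1).mul_left _

include hq hq1 hr0 hr1 hstep hc hc0 in
lemma tendsto_even : Tendsto (fun p : ℕ => c (2 * p) / oddDF q p) atTop
    (nhds (c 0 + ∑' j : ℕ, c (2 * j + 1) / oddDF q (j + 1))) := by
  have h1 := (summableE q hq hq1 r hr0 hr1 hstep c hc hc0).hasSum.tendsto_sum_nat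
  have h2 := (tendsto_const_nhds (x := c 0) (f := atTop (α := ℕ))).add h1
  apply h2.congr
  intro p
  exact (tel_even q hq hq1 c hc p).symm

include hq hq1 hr0 hr1 hstep hc hc0 in
lemma tendsto_odd : Tendsto (fun p : ℕ => c (2 * p + 1) / evenDF q p) atTop
    (nhds (c 1 + ∑' j : ℕ, c (2 * j + 2) / evenDF q (j + 1))) := by
  have h1 := (summableO q hq hq1 r hr0 hr1 hstep c hc hc0).hasSum.tendsto_sum_nat
  have h2 := (tendsto_const_nhds (x := c 1) (f := atTop (α := ℕ))).add h1
  apply h2.congr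
  intro p
  exact (tel_odd q hq hq1 c hc p).symm

end Tel

section EvalKey
variable (q : ℝ)

lemma eval_key (hq : 0 < q) (hq1 : q ≠ 1) (R : ℕ → Polynomial ℝ)
    (hrec : ∀ n : ℕ, 1 ≤ n →
      Real.sqrt (qnum q n) • R (n - 1) + Real.sqrt (qnum q (n + 1)) • R (n + 1) = X * R n)
    (x : ℂ) (hx : x ^ 2 = -1) (c : ℕ → ℝ)
    (hc : ∀ n, c (n + 2) = c (n + 1) + qnum q (n + 1) * c n) (w : ℂ)
    (h0 : aeval x (R 0) = w * (c 0 : ℝ)) (h1 : aeval x (R 1) = w * x * (c 1 : ℝ)) :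
    ∀ n, aeval x (R n) * ((Real.sqrt (qfact q n) : ℝ) : ℂ) = w * x ^ n * (c n : ℝ) := by
  have key : ∀ n, (aeval x (R n) * ((Real.sqrt (qfact q n) : ℝ) : ℂ) = w * x ^ n * (c n : ℝ))
      ∧ (aeval x (R (n+1)) * ((Real.sqrt (qfact q (n+1)) : ℝ) : ℂ) = w * x ^ (n+1) * (c (n+1) : ℝ)) := by
    intro n
    induction n with
    | zero =>
      constructor
      · rw [show qfact q 0 = 1 from rfl, Real.sqrt_one, h0]
        push_cast
        ring
      · rw [show qfact q 1 = 1 * qnum q 1 from rfl, one_mul, qnum_one q hq hq1,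
          Real.sqrt_one, h1]
        push_cast
        ring
    | succ n ih =>
      refine ⟨ih.2, ?_⟩
      -- recurrence at n+1
      have hr := hrec (n + 1) (by omega)
      rw [show n + 1 - 1 = n from rfl] at hr
      have hre : ((Real.sqrt (qnum q (n+1)) : ℝ) : ℂ) * aeval x (R n)
          + ((Real.sqrt (qnum q (n+2)) : ℝ) : ℂ) * aeval x (R (n+2)) = x * aeval x (R (n+1)) := by
        have := congrArg (aeval x) hr
        simpa [map_add, map_smul, Complex.real_smul, map_mul] using this
      -- sqrt facts
      have hfq : ∀ m, (0:ℝ) < qfact q m := qfact_pos q hq hq1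
      have hsq : ∀ m, Real.sqrt (qfact q (m+1)) = Real.sqrt (qfact q m) * Real.sqrt (qnum q (m+1)) := by
        intro m
        rw [show qfact q (m+1) = qfact q m * qnum q (m+1) from rfl,
          Real.sqrt_mul (hfq m).le]
      have hsqq : ∀ m, (Real.sqrt (qnum q (m+1))) * (Real.sqrt (qnum q (m+1))) = qnum q (m+1) :=
        fun m => Real.mul_self_sqrt (qnum_pos q hq hq1 m).le
      -- main computation
      have e1 : aeval x (R (n+2)) * ((Real.sqrt (qnum q (n+2)) : ℝ) : ℂ)
          = x * aeval x (R (n+1)) - ((Real.sqrt (qnum q (n+1)) : ℝ) : ℂ) * aeval x (R n) := by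
        rw [← hre]; ring
      calc aeval x (R (n+2)) * ((Real.sqrt (qfact q (n+2)) : ℝ) : ℂ)
          = (aeval x (R (n+2)) * ((Real.sqrt (qnum q (n+2)) : ℝ) : ℂ))
            * ((Real.sqrt (qfact q (n+1)) : ℝ) : ℂ) := by
            rw [hsq (n+1)]
            push_cast
            ring
      _ = (x * aeval x (R (n+1)) - ((Real.sqrt (qnum q (n+1)) : ℝ) : ℂ) * aeval x (R n))
            * ((Real.sqrt (qfact q (n+1)) : ℝ) : ℂ) := by rw [e1]
      _ = x * (aeval x (R (n+1)) * ((Real.sqrt (qfact q (n+1)) : ℝ) : ℂ))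
            - ((Real.sqrt (qnum q (n+1)) : ℝ) : ℂ) * ((Real.sqrt (qnum q (n+1)) : ℝ) : ℂ)
              * (aeval x (R n) * ((Real.sqrt (qfact q n) : ℝ) : ℂ)) := by
            rw [hsq n]
            push_cast
            ring
      _ = x * (w * x ^ (n+1) * (c (n+1) : ℝ))
            - ((qnum q (n+1) : ℝ) : ℂ) * (w * x ^ n * (c n : ℝ)) := by
            rw [ih.1, ih.2, ← Complex.ofReal_mul, hsqq n]
      _ = w * x ^ (n+2) * ((c (n+2) : ℝ) : ℂ) := by
            rw [hc n]
            push_cast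
            linear_combination (-(qnum q (n+1) : ℂ) * w * ((c n : ℝ) : ℂ) * x ^ n) * hx
  exact fun n => (key n).1
end EvalKey

lemma Ipow_comb (m : ℕ) : Complex.I ^ m * Complex.I ^ (m + 1) = ((-1:ℂ)) ^ m * Complex.I := by
  rw [← pow_add, show m + (m + 1) = 2 * m + 1 by ring, pow_succ, pow_mul, Complex.I_sq]

lemma sgn1 (m : ℕ) : -(((-Complex.I) * Complex.I ^ m) * (-Complex.I) ^ (m + 1)) = 1 := by
  rw [neg_pow]
  have h3 : ((-1:ℂ)) ^ (m + 1) * ((-1:ℂ)) ^ m = -1 := by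
    rw [← pow_add, show (m + 1) + m = 2 * m + 1 by ring]
    exact Odd.neg_one_pow ⟨m, by ring⟩
  calc -((-Complex.I) * Complex.I ^ m * (((-1:ℂ)) ^ (m + 1) * Complex.I ^ (m + 1)))
      = ((-1:ℂ)) ^ (m + 1) * (Complex.I ^ m * Complex.I ^ (m + 1)) * Complex.I := by ring
    _ = ((-1:ℂ)) ^ (m + 1) * (((-1:ℂ)) ^ m * Complex.I) * Complex.I := by rw [Ipow_comb]
    _ = (((-1:ℂ)) ^ (m + 1) * ((-1:ℂ)) ^ m) * (Complex.I * Complex.I) := by ring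
    _ = 1 := by rw [h3, Complex.I_mul_I]; ring

lemma sgn2 (m : ℕ) : ((-Complex.I) * Complex.I ^ (m + 1)) * (-Complex.I) ^ m = 1 := by
  rw [neg_pow]
  have h3 : ((-1:ℂ)) ^ m * ((-1:ℂ)) ^ m = 1 := by
    rw [← pow_add]
    exact Even.neg_one_pow ⟨m, by ring⟩
  calc (-Complex.I) * Complex.I ^ (m + 1) * (((-1:ℂ)) ^ m * Complex.I ^ m)
      = ((-1:ℂ)) ^ m * (Complex.I ^ m * Complex.I ^ (m + 1)) * (-Complex.I) := by ring
    _ = ((-1:ℂ)) ^ m * (((-1:ℂ)) ^ m * Complex.I) * (-Complex.I) := by rw [Ipow_comb]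
    _ = (((-1:ℂ)) ^ m * ((-1:ℂ)) ^ m) * (Complex.I * (-Complex.I)) := by ring
    _ = 1 := by rw [h3, one_mul]; simp [Complex.I_mul_I]

/-- with `A(n) = −√[n]·Q_{n-1}(i;q)·P_n(−i;q)` and
`B(n) = √[n]·Q_n(i;q)·P_{n-1}(−i;q)`, one has
`lim_{p→∞} A(2p) = lim_{p→∞} B(2p+1) = A_α^{(1)}·A_β^{(1)}` and
`lim_{p→∞} A(2p+1) = lim_{p→∞} B(2p) = S_α^{(2)}·S_β^{(2)}`
(in particular all four limits exist and are real). -/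
theorem stmt16 (q : ℝ) (hq : 0 < q) (hq1 : q ≠ 1)
    (P Qp : ℕ → Polynomial ℝ)
    (hP0 : P 0 = 1) (hP1 : P 1 = X)
    (hQ0 : Qp 0 = 0) (hQ1 : Qp 1 = 1)
    (hPrec : ∀ n : ℕ, 1 ≤ n →
      Real.sqrt (qnum q n) • P (n - 1) + Real.sqrt (qnum q (n + 1)) • P (n + 1) = X * P n)
    (hQrec : ∀ n : ℕ, 1 ≤ n →
      Real.sqrt (qnum q n) • Qp (n - 1) + Real.sqrt (qnum q (n + 1)) • Qp (n + 1) = X * Qp n)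
    (A B : ℕ → ℂ)
    (hA : ∀ n : ℕ, A n = -(Real.sqrt (qnum q n) : ℂ) *
      aeval Complex.I (Qp (n - 1)) * aeval (-Complex.I) (P n))
    (hB : ∀ n : ℕ, B n = (Real.sqrt (qnum q n) : ℂ) *
      aeval Complex.I (Qp n) * aeval (-Complex.I) (P (n - 1))) :
    Tendsto (fun p : ℕ => A (2 * p)) atTop (nhds ((Aalpha1 q * Abeta1 q : ℝ) : ℂ)) ∧
    Tendsto (fun p : ℕ => B (2 * p + 1)) atTop (nhds ((Aalpha1 q * Abeta1 q : ℝ) : ℂ)) ∧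
    Tendsto (fun p : ℕ => A (2 * p + 1)) atTop (nhds ((Salpha2 q * Sbeta2 q : ℝ) : ℂ)) ∧
    Tendsto (fun p : ℕ => B (2 * p)) atTop (nhds ((Salpha2 q * Sbeta2 q : ℝ) : ℂ)) := by
  classical
  obtain ⟨r, hr0, hr1, hstep⟩ := exists_ratio q hq hq1
  have hcA : ∀ n, aS q (n + 2) = aS q (n + 1) + qnum q (n + 1) * aS q n := fun n => rfl
  have hcB : ∀ n, bS q (n + 2) = bS q (n + 1) + qnum q (n + 1) * bS q n := fun n => rfl
  have hann : ∀ n, 0 ≤ aS q n := fun n => (aS_pos q hq hq1 n).le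
  have hbnn : ∀ n, 0 ≤ bS q n := fun n => bS_nonneg q hq hq1 n
  have hxI : Complex.I ^ 2 = -1 := Complex.I_sq
  have hxmI : (-Complex.I) ^ 2 = -1 := by rw [neg_sq]; exact Complex.I_sq
  have hPa := eval_key q hq hq1 P hPrec (-Complex.I) hxmI (aS q) hcA 1
    (by rw [hP0, map_one, show aS q 0 = 1 from rfl]; push_cast; ring)
    (by rw [hP1, aeval_X, show aS q 1 = 1 from rfl]; push_cast; ring)
  have hQb := eval_key q hq hq1 Qp hQrec Complex.I hxI (bS q) hcB (-Complex.I)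
    (by rw [hQ0, map_zero, show bS q 0 = 0 from rfl]; push_cast; ring)
    (by rw [hQ1, map_one, show bS q 1 = 1 from rfl]; push_cast; linear_combination hxI)
  have hsqpos : ∀ m : ℕ, (0:ℝ) < Real.sqrt (qnum q (m+1)) :=
    fun m => Real.sqrt_pos.mpr (qnum_pos q hq hq1 m)
  have hFmul : ∀ m : ℕ, Real.sqrt (qfact q m) * Real.sqrt (qfact q (m+1))
      = qfact q m * Real.sqrt (qnum q (m+1)) := by
    intro m
    rw [show qfact q (m+1) = qfact q m * qnum q (m+1) from rfl,
      Real.sqrt_mul (qfact_pos q hq hq1 m).le, ← mul_assoc,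
      Real.mul_self_sqrt (qfact_pos q hq hq1 m).le]
  -- the closed formulas for A and B
  have hAf : ∀ m : ℕ, A (m+1) = ((bS q m * aS q (m+1) / qfact q m : ℝ) : ℂ) := by
    intro m
    have e1 := hQb m
    have e2 := hPa (m+1)
    have expand : A (m+1) * ((Real.sqrt (qfact q m) : ℝ) : ℂ) * ((Real.sqrt (qfact q (m+1)) : ℝ) : ℂ)
        = (-(((-Complex.I) * Complex.I ^ m) * (-Complex.I) ^ (m+1)))
          * (((Real.sqrt (qnum q (m+1)) : ℝ) : ℂ) * (((bS q m : ℝ) : ℂ) * ((aS q (m+1) : ℝ) : ℂ))) := by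
      rw [hA (m+1), show m + 1 - 1 = m from rfl]
      calc -((Real.sqrt (qnum q (m+1)) : ℝ) : ℂ) * aeval Complex.I (Qp m) * aeval (-Complex.I) (P (m+1))
            * ((Real.sqrt (qfact q m) : ℝ) : ℂ) * ((Real.sqrt (qfact q (m+1)) : ℝ) : ℂ)
          = -((Real.sqrt (qnum q (m+1)) : ℝ) : ℂ)
            * (aeval Complex.I (Qp m) * ((Real.sqrt (qfact q m) : ℝ) : ℂ))
            * (aeval (-Complex.I) (P (m+1)) * ((Real.sqrt (qfact q (m+1)) : ℝ) : ℂ)) := by ring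
        _ = -((Real.sqrt (qnum q (m+1)) : ℝ) : ℂ)
            * ((-Complex.I) * Complex.I ^ m * ((bS q m : ℝ) : ℂ))
            * ((1:ℂ) * (-Complex.I) ^ (m+1) * ((aS q (m+1) : ℝ) : ℂ)) := by rw [e1, e2]
        _ = _ := by ring
    have key2 : A (m+1) * (((qfact q m : ℝ) : ℂ) * ((Real.sqrt (qnum q (m+1)) : ℝ) : ℂ))
        = ((Real.sqrt (qnum q (m+1)) : ℝ) : ℂ) * (((bS q m : ℝ) : ℂ) * ((aS q (m+1) : ℝ) : ℂ)) := by
      rw [← Complex.ofReal_mul, ← hFmul m, Complex.ofReal_mul, ← mul_assoc, expand, sgn1 m, one_mul]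
    have hne : ((Real.sqrt (qnum q (m+1)) : ℝ) : ℂ) ≠ 0 := by
      exact_mod_cast (hsqpos m).ne'
    have hfne : ((qfact q m : ℝ) : ℂ) ≠ 0 := by
      exact_mod_cast (qfact_pos q hq hq1 m).ne'
    have hcan : A (m+1) * ((qfact q m : ℝ) : ℂ) = ((bS q m : ℝ) : ℂ) * ((aS q (m+1) : ℝ) : ℂ) := by
      apply mul_right_cancel₀ hne
      calc A (m+1) * ((qfact q m : ℝ) : ℂ) * ((Real.sqrt (qnum q (m+1)) : ℝ) : ℂ)
          = A (m+1) * (((qfact q m : ℝ) : ℂ) * ((Real.sqrt (qnum q (m+1)) : ℝ) : ℂ)) := by ring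
        _ = ((Real.sqrt (qnum q (m+1)) : ℝ) : ℂ) * (((bS q m : ℝ) : ℂ) * ((aS q (m+1) : ℝ) : ℂ)) := key2
        _ = _ := by ring
    rw [Complex.ofReal_div, Complex.ofReal_mul, eq_div_iff hfne]
    exact hcan
  have hBf : ∀ m : ℕ, B (m+1) = ((bS q (m+1) * aS q m / qfact q m : ℝ) : ℂ) := by
    intro m
    have e1 := hQb (m+1)
    have e2 := hPa m
    have expand : B (m+1) * ((Real.sqrt (qfact q m) : ℝ) : ℂ) * ((Real.sqrt (qfact q (m+1)) : ℝ) : ℂ)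
        = ((((-Complex.I) * Complex.I ^ (m+1)) * (-Complex.I) ^ m))
          * (((Real.sqrt (qnum q (m+1)) : ℝ) : ℂ) * (((bS q (m+1) : ℝ) : ℂ) * ((aS q m : ℝ) : ℂ))) := by
      rw [hB (m+1), show m + 1 - 1 = m from rfl]
      calc ((Real.sqrt (qnum q (m+1)) : ℝ) : ℂ) * aeval Complex.I (Qp (m+1)) * aeval (-Complex.I) (P m)
            * ((Real.sqrt (qfact q m) : ℝ) : ℂ) * ((Real.sqrt (qfact q (m+1)) : ℝ) : ℂ)
          = ((Real.sqrt (qnum q (m+1)) : ℝ) : ℂ)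
            * (aeval Complex.I (Qp (m+1)) * ((Real.sqrt (qfact q (m+1)) : ℝ) : ℂ))
            * (aeval (-Complex.I) (P m) * ((Real.sqrt (qfact q m) : ℝ) : ℂ)) := by ring
        _ = ((Real.sqrt (qnum q (m+1)) : ℝ) : ℂ)
            * ((-Complex.I) * Complex.I ^ (m+1) * ((bS q (m+1) : ℝ) : ℂ))
            * ((1:ℂ) * (-Complex.I) ^ m * ((aS q m : ℝ) : ℂ)) := by rw [e1, e2]
        _ = _ := by ring
    have key2 : B (m+1) * (((qfact q m : ℝ) : ℂ) * ((Real.sqrt (qnum q (m+1)) : ℝ) : ℂ))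
        = ((Real.sqrt (qnum q (m+1)) : ℝ) : ℂ) * (((bS q (m+1) : ℝ) : ℂ) * ((aS q m : ℝ) : ℂ)) := by
      rw [← Complex.ofReal_mul, ← hFmul m, Complex.ofReal_mul, ← mul_assoc, expand, sgn2 m, one_mul]
    have hne : ((Real.sqrt (qnum q (m+1)) : ℝ) : ℂ) ≠ 0 := by
      exact_mod_cast (hsqpos m).ne'
    have hfne : ((qfact q m : ℝ) : ℂ) ≠ 0 := by
      exact_mod_cast (qfact_pos q hq hq1 m).ne'
    have hcan : B (m+1) * ((qfact q m : ℝ) : ℂ) = ((bS q (m+1) : ℝ) : ℂ) * ((aS q m : ℝ) : ℂ) := by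
      apply mul_right_cancel₀ hne
      calc B (m+1) * ((qfact q m : ℝ) : ℂ) * ((Real.sqrt (qnum q (m+1)) : ℝ) : ℂ)
          = B (m+1) * (((qfact q m : ℝ) : ℂ) * ((Real.sqrt (qnum q (m+1)) : ℝ) : ℂ)) := by ring
        _ = ((Real.sqrt (qnum q (m+1)) : ℝ) : ℂ) * (((bS q (m+1) : ℝ) : ℂ) * ((aS q m : ℝ) : ℂ)) := key2
        _ = _ := by ring
    rw [Complex.ofReal_div, Complex.ofReal_mul, eq_div_iff hfne]
    exact hcan
  -- the four real limits
  have hLA1 : Tendsto (fun p : ℕ => aS q (2*p) / oddDF q p) atTop (nhds (Aalpha1 q)) := by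
    have h := tendsto_even q hq hq1 r hr0 hr1 hstep (aS q) hcA hann
    have he : Aalpha1 q = aS q 0 + ∑' j : ℕ, aS q (2*j+1) / oddDF q (j+1) := by
      rw [Aalpha1, show aS q 0 = 1 from rfl]
      congr 1
      apply tsum_congr
      intro k
      rw [sumA_even q k, inv_mul_eq_div]
    rw [he]; exact h
  have hLB1 : Tendsto (fun p : ℕ => bS q (2*p+1) / evenDF q p) atTop (nhds (Abeta1 q)) := by
    have h := tendsto_odd q hq hq1 r hr0 hr1 hstep (bS q) hcB hbnn
    have he : Abeta1 q = bS q 1 + ∑' j : ℕ, bS q (2*j+2) / evenDF q (j+1) := by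
      rw [Abeta1, show bS q 1 = 1 from rfl]
      congr 1
      apply tsum_congr
      intro k
      rw [sumB_odd q k, inv_mul_eq_div]
    rw [he]; exact h
  have hSsumO_a : Summable (fun j : ℕ => aS q (2*j+2) / evenDF q (j+1)) :=
    summableO q hq hq1 r hr0 hr1 hstep (aS q) hcA hann
  have hSX : Summable (fun k : ℕ => oddDF q (k+1) / evenDF q (k+1)) := by
    apply Summable.of_nonneg_of_le
      (fun k => div_nonneg (oddDF_pos q hq hq1 (k+1)).le (evenDF_pos q hq hq1 (k+1)).le)
      (fun k => ?_)
      ((summable_geometric_of_lt_one hr0.le hr1).mul_left r)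
    rw [div_le_iff₀ (evenDF_pos q hq hq1 (k+1))]
    calc oddDF q (k+1) ≤ r^(k+1) * evenDF q (k+1) := oddDF_le q hq hq1 r hr0 hstep (k+1)
      _ = r * r^k * evenDF q (k+1) := by ring
  have hLA2 : Tendsto (fun p : ℕ => aS q (2*p+1) / evenDF q p) atTop (nhds (Salpha2 q)) := by
    have h := tendsto_odd q hq hq1 r hr0 hr1 hstep (aS q) hcA hann
    have he : Salpha2 q = aS q 1 + ∑' j : ℕ, aS q (2*j+2) / evenDF q (j+1) := by
      rw [Salpha2, show aS q 1 = 1 from rfl]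
      have hY : ∀ k : ℕ, (evenDF q (k+1))⁻¹ * ∑ m ∈ Finset.range (k+1), alphaC q m (2*k+1)
          = aS q (2*k+2) / evenDF q (k+1) - oddDF q (k+1) / evenDF q (k+1) := by
        intro k
        rw [sumA_odd q k, mul_sub, inv_mul_eq_div, inv_mul_eq_div]
      rw [tsum_congr hY, Summable.tsum_sub hSsumO_a hSX]
      ring
    rw [he]; exact h
  have hSsumE_b : Summable (fun j : ℕ => bS q (2*j+1) / oddDF q (j+1)) :=
    summableE q hq hq1 r hr0 hr1 hstep (bS q) hcB hbnn
  have hSX2 : Summable (fun k : ℕ => evenDF q (k+1) / oddDF q (k+2)) := by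
    apply Summable.of_nonneg_of_le
      (fun k => div_nonneg (evenDF_pos q hq hq1 (k+1)).le (oddDF_pos q hq hq1 (k+2)).le)
      (fun k => ?_)
      ((summable_geometric_of_lt_one hr0.le hr1).mul_left r)
    rw [div_le_iff₀ (oddDF_pos q hq hq1 (k+2))]
    calc evenDF q (k+1) ≤ r^(k+1) * oddDF q (k+2) := evenDF_le q hq hq1 r hr0 hstep (k+1)
      _ = r * r^k * oddDF q (k+2) := by ring
  have hSshift : Summable (fun k : ℕ => bS q (2*k+3) / oddDF q (k+2)) := by
    have h := (summable_nat_add_iff 1).mpr hSsumE_b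
    apply h.congr
    intro k
    rw [show 2*(k+1)+1 = 2*k+3 by ring, show k+1+1 = k+2 from rfl]
  have hLB2 : Tendsto (fun p : ℕ => bS q (2*p) / oddDF q p) atTop (nhds (Sbeta2 q)) := by
    have h := tendsto_even q hq hq1 r hr0 hr1 hstep (bS q) hcB hbnn
    have he : Sbeta2 q = bS q 0 + ∑' j : ℕ, bS q (2*j+1) / oddDF q (j+1) := by
      rw [Sbeta2, show bS q 0 = 0 from rfl, zero_add]
      have hY : ∀ k : ℕ, (oddDF q (k+2))⁻¹ * ∑ m ∈ Finset.range (k+1), betaC q m (2*k+2)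
          = bS q (2*k+3) / oddDF q (k+2) - evenDF q (k+1) / oddDF q (k+2) := by
        intro k
        rw [sumB_even q k, mul_sub, inv_mul_eq_div, inv_mul_eq_div]
      rw [tsum_congr hY, Summable.tsum_sub hSshift hSX2, Summable.tsum_eq_zero_add hSsumE_b]
      have h0 : bS q 1 / oddDF q 1 = 1 := by
        rw [show bS q 1 = 1 from rfl, show oddDF q 1 = qnum q (2*0+1) * oddDF q 0 from rfl,
          show oddDF q 0 = 1 from rfl, show qnum q (2*0+1) = qnum q 1 from rfl,
          qnum_one q hq hq1]
        norm_num
      rw [h0]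
      have hidx : ∑' (j : ℕ), bS q (2*(j+1)+1) / oddDF q (j+1+1)
          = ∑' (k : ℕ), bS q (2*k+3) / oddDF q (k+2) := by
        apply tsum_congr
        intro k
        rw [show 2*(k+1)+1 = 2*k+3 by ring, show k+1+1 = k+2 from rfl]
      rw [hidx]
      ring
    rw [he]; exact h
  refine ⟨?_, ?_, ?_, ?_⟩
  · -- A (2p) → Aalpha1 * Abeta1
    apply (tendsto_add_atTop_iff_nat 1).mp
    have hprod := hLB1.mul (hLA1.comp (tendsto_add_atTop_nat 1))
    have hc := (Complex.continuous_ofReal.tendsto _).comp hprod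
    rw [show Aalpha1 q * Abeta1 q = Abeta1 q * Aalpha1 q from mul_comm _ _]
    apply hc.congr
    intro p
    show ((bS q (2*p+1) / evenDF q p * (aS q (2*(p+1)) / oddDF q (p+1)) : ℝ) : ℂ) = A (2*(p+1))
    rw [show 2*(p+1) = (2*p+1)+1 by ring, hAf (2*p+1)]
    congr 1
    rw [div_mul_div_comm, qfact_eq_Dq, Dq_odd, show 2*p+1+1 = 2*(p+1) by ring, Dq_even]
  · -- B (2p+1) → Aalpha1 * Abeta1
    have hprod := hLB1.mul hLA1
    have hc := (Complex.continuous_ofReal.tendsto _).comp hprod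
    rw [show Aalpha1 q * Abeta1 q = Abeta1 q * Aalpha1 q from mul_comm _ _]
    apply hc.congr
    intro p
    show ((bS q (2*p+1) / evenDF q p * (aS q (2*p) / oddDF q p) : ℝ) : ℂ) = B (2*p+1)
    rw [hBf (2*p)]
    congr 1
    rw [div_mul_div_comm, qfact_eq_Dq, Dq_even, Dq_odd, mul_comm (evenDF q p) (oddDF q p)]
  · -- A (2p+1) → Salpha2 * Sbeta2
    have hprod := hLB2.mul hLA2
    have hc := (Complex.continuous_ofReal.tendsto _).comp hprod
    rw [show Salpha2 q * Sbeta2 q = Sbeta2 q * Salpha2 q from mul_comm _ _]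
    apply hc.congr
    intro p
    show ((bS q (2*p) / oddDF q p * (aS q (2*p+1) / evenDF q p) : ℝ) : ℂ) = A (2*p+1)
    rw [hAf (2*p)]
    congr 1
    rw [div_mul_div_comm, qfact_eq_Dq, Dq_even, Dq_odd]
  · -- B (2p) → Salpha2 * Sbeta2
    apply (tendsto_add_atTop_iff_nat 1).mp
    have hprod := (hLB2.comp (tendsto_add_atTop_nat 1)).mul hLA2
    have hc := (Complex.continuous_ofReal.tendsto _).comp hprod
    rw [show Salpha2 q * Sbeta2 q = Sbeta2 q * Salpha2 q from mul_comm _ _]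
    apply hc.congr
    intro p
    show ((bS q (2*(p+1)) / oddDF q (p+1) * (aS q (2*p+1) / evenDF q p) : ℝ) : ℂ) = B (2*(p+1))
    rw [show 2*(p+1) = (2*p+1)+1 by ring, hBf (2*p+1)]
    congr 1
    rw [div_mul_div_comm, qfact_eq_Dq, Dq_odd, show 2*p+1+1 = 2*(p+1) by ring, Dq_even,
      mul_comm (evenDF q p) (oddDF q (p+1))]
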